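/- arXiv:2105.14223 — 3 statements merged into one kernel-verified Lean document; each statement's English description precedes it below -/
import Mathlib

section
/- Let q be a real number with q > 1, let r be a natural number, and let s be a complex number with Re(s) > 0. Then ∏_{1 ≤ i < j ≤ r} (1 − q^{−2(2s+2r−i−j+2)}) / (1 − q^{−2(2s+2r−i−j+1)}) · ∏_{i=1}^{r} (q^{−(2s+2r−2i)} − 1) / ( q · (1 − q^{−(2s+2r−2i+1)}) ) = (−q)^{−r} · ∏_{i=1}^{r} (1 − q^{−2(2s+r+i)}) / (1 − q^{−2(2s+2i)}) · ∏_{i=1}^{r} (1 − q^{−(2s+2i−2)}) / (1 − q^{−(2s+2i−1)}). (Under the hypothesis Re(s) > 0 every denominator occurring is nonzero.) -/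
/-!
For fixed `j` the inner product over `i` telescopes to
`(1 - q^{-2(2s+2r-j+1)}) / (1 - q^{-2(2s+2r-2j+2)})`; reflecting `j ↦ r + 1 - j` turns the
outer product into the first product on the right. Each factor of the single product on the
left is `(-q)⁻¹` times the factor of the second product on the right at the reflected index.
-/

open Finset

theorem prod_Icc_one_reflect {M : Type*} [CommMonoid M] (f : ℤ → M) (r : ℕ) :
    ∏ i ∈ Icc 1 r, f (r + 1 - i) = ∏ i ∈ Icc 1 r, f i :=
  prod_nbij' (fun i => r + 1 - i) (fun i => r + 1 - i) (by simp only [mem_Icc]; omega)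
    (by simp only [mem_Icc]; omega) (by simp only [mem_Icc]; omega)
    (by simp only [mem_Icc]; omega) fun i hi => by rw [mem_Icc] at hi; congr 1; omega

theorem prod_Ico_div_succ_of_ne_zero {G₀ : Type*} [CommGroupWithZero G₀] (g : ℕ → G₀)
    {m n : ℕ} (hmn : m ≤ n) (hg : ∀ i ∈ Icc m n, g i ≠ 0) :
    ∏ i ∈ Ico m n, g i / g (i + 1) = g m / g n := by
  induction n, hmn using Nat.le_induction with
  | base => simp [div_self (hg m (by simp))]
  | succ n hmn ih =>
    rw [prod_Ico_succ_top hmn, ih fun i hi => hg i (Icc_subset_Icc_right n.le_succ hi),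
      div_mul_div_cancel₀ (hg n (by simp [hmn]))]

theorem prod_Icc_prod_Ico_div_eq {G₀ : Type*} [CommGroupWithZero G₀] (F : ℤ → G₀)
    (hF : ∀ n, 0 < n → F n ≠ 0) (r : ℕ) :
    ∏ j ∈ Icc 1 r, ∏ i ∈ Ico 1 j, F (2 * r - i - j + 2) / F (2 * r - i - j + 1) =
      ∏ i ∈ Icc 1 r, F (r + i) / F (2 * i) := by
  calc _ = ∏ j ∈ Icc 1 r, F (2 * r - j + 1) / F (2 * r - 2 * j + 2) := by
        refine prod_congr rfl fun j hj => ?_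
        rw [mem_Icc] at hj
        convert prod_Ico_div_succ_of_ne_zero (fun i : ℕ => F (2 * r - i - j + 2)) hj.1
          (fun i hi => hF _ (by rw [mem_Icc] at hi; omega)) using 3 <;> push_cast <;> ring_nf
    _ = ∏ i ∈ Icc 1 r, F (2 * r - (r + 1 - i) + 1) / F (2 * r - 2 * (r + 1 - i) + 2) :=
        (prod_Icc_one_reflect (fun i => F (2 * r - i + 1) / F (2 * r - 2 * i + 2)) r).symm
    _ = _ := by ring_nf

theorem one_sub_cpow_neg_ne_zero {q : ℝ} (hq : 1 < q) {x : ℂ} (hx : 0 < x.re) :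
    1 - (q : ℂ) ^ (-x) ≠ 0 := by
  refine sub_ne_zero.2 fun h => ?_
  have := Complex.norm_cpow_eq_rpow_re_of_pos (by linarith) (-x) (x := q)
  rw [← h, norm_one, Complex.neg_re] at this
  exact (Real.rpow_lt_one_of_one_lt_of_neg hq (neg_lt_zero.2 hx)).ne' this

theorem prod_Icc_prod_Ico_one_sub_cpow_div {q : ℝ} (hq : 1 < q) {s : ℂ} (hs : 0 < s.re)
    (r : ℕ) :
    ∏ j ∈ Icc 1 r, ∏ i ∈ Ico 1 j,
        (1 - (q : ℂ) ^ (-(2 * (2 * s + 2 * (r : ℂ) - (i : ℂ) - (j : ℂ) + 2)))) /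
          (1 - (q : ℂ) ^ (-(2 * (2 * s + 2 * (r : ℂ) - (i : ℂ) - (j : ℂ) + 1)))) =
      ∏ i ∈ Icc 1 r, (1 - (q : ℂ) ^ (-(2 * (2 * s + (r : ℂ) + (i : ℂ))))) /
          (1 - (q : ℂ) ^ (-(2 * (2 * s + 2 * (i : ℂ))))) := by
  have hF (n : ℤ) (hn : 0 < n) : 1 - (q : ℂ) ^ (-(2 * (2 * s + n))) ≠ 0 :=
    one_sub_cpow_neg_ne_zero hq <| by
      simp only [Complex.mul_re, Complex.add_re, Complex.re_ofNat, Complex.im_ofNat,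
        Complex.intCast_re, zero_mul, sub_zero]
      positivity
  convert prod_Icc_prod_Ico_div_eq _ hF r using 1 <;> push_cast <;> ring_nf

theorem prod_Icc_cpow_sub_one_div (q s : ℂ) (r : ℕ) :
    ∏ i ∈ Icc 1 r, (q ^ (-(2 * s + 2 * (r : ℂ) - 2 * (i : ℂ))) - 1) /
        (q * (1 - q ^ (-(2 * s + 2 * (r : ℂ) - 2 * (i : ℂ) + 1)))) =
      (-q) ^ (-(r : ℤ)) * ∏ i ∈ Icc 1 r,
        (1 - q ^ (-(2 * s + 2 * (i : ℂ) - 2))) / (1 - q ^ (-(2 * s + 2 * (i : ℂ) - 1))) := by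
  set G : ℤ → ℂ := fun i =>
    (1 - q ^ (-(2 * s + 2 * i - 2))) / (1 - q ^ (-(2 * s + 2 * i - 1)))
  calc _ = ∏ i ∈ Icc 1 r, (-q)⁻¹ * G (r + 1 - i) := prod_congr rfl fun i _ => by
          simp only [G]; push_cast
          rw [show -(2 * s + 2 * ((r : ℂ) + 1 - i) - 2) = -(2 * s + 2 * r - 2 * i) by ring,
            show -(2 * s + 2 * ((r : ℂ) + 1 - i) - 1) = -(2 * s + 2 * r - 2 * i + 1) by ring,
            div_mul_eq_div_div_swap]
          ring
    _ = (-q) ^ (-(r : ℤ)) * ∏ i ∈ Icc 1 r, G i := by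
          rw [prod_mul_distrib, prod_const, Nat.card_Icc, Nat.add_sub_cancel, zpow_neg,
            zpow_natCast, inv_pow, prod_Icc_one_reflect]
    _ = _ := by simp only [G]; push_cast; rfl

/-- Evaluation of the intertwining constant `C⁻_{w'_r}(s)`
(from the proof of Proposition 5.2 of Liu, "Theta correspondence for almost
unramified representations of unitary groups"): for a real `q > 1`, a natural
number `r`, and a complex `s` with `Re s > 0`,
`∏_{1 ≤ i < j ≤ r} (1 − q^{−2(2s+2r−i−j+2)})/(1 − q^{−2(2s+2r−i−j+1)})
  · ∏_{i=1}^{r} (q^{−(2s+2r−2i)} − 1)/(q(1 − q^{−(2s+2r−2i+1)}))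
= (−q)^{−r} · ∏_{i=1}^{r} (1 − q^{−2(2s+r+i)})/(1 − q^{−2(2s+2i)})
  · ∏_{i=1}^{r} (1 − q^{−(2s+2i−2)})/(1 − q^{−(2s+2i−1)})`. -/
theorem stmt_0 (q : ℝ) (hq : 1 < q) (r : ℕ) (s : ℂ) (hs : 0 < s.re) :
    (∏ j ∈ Finset.Icc 1 r, ∏ i ∈ Finset.Ico 1 j,
        (1 - (q : ℂ) ^ (-(2 * (2 * s + 2 * (r : ℂ) - (i : ℂ) - (j : ℂ) + 2)))) /
          (1 - (q : ℂ) ^ (-(2 * (2 * s + 2 * (r : ℂ) - (i : ℂ) - (j : ℂ) + 1))))) *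
      (∏ i ∈ Finset.Icc 1 r,
        ((q : ℂ) ^ (-(2 * s + 2 * (r : ℂ) - 2 * (i : ℂ))) - 1) /
          ((q : ℂ) * (1 - (q : ℂ) ^ (-(2 * s + 2 * (r : ℂ) - 2 * (i : ℂ) + 1))))) =
    (-(q : ℂ)) ^ (-(r : ℤ)) *
      (∏ i ∈ Finset.Icc 1 r,
        (1 - (q : ℂ) ^ (-(2 * (2 * s + (r : ℂ) + (i : ℂ))))) /
          (1 - (q : ℂ) ^ (-(2 * (2 * s + 2 * (i : ℂ)))))) *
      (∏ i ∈ Finset.Icc 1 r,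
        (1 - (q : ℂ) ^ (-(2 * s + 2 * (i : ℂ) - 2))) /
          (1 - (q : ℂ) ^ (-(2 * s + 2 * (i : ℂ) - 1)))) := by
  rw [prod_Icc_prod_Ico_one_sub_cpow_div hq hs, prod_Icc_cpow_sub_one_div]
  ring
end

section
/- Let q be a real number with q > 1, let r be a natural number, and let s be a complex number with Re(s) > 0. Define C⁻(s) = ∏_{1 ≤ i < j ≤ r} (1 − q^{−2(2s+2r−i−j+2)}) / (1 − q^{−2(2s+2r−i−j+1)}) · ∏_{i=1}^{r} (q^{−(2s+2r−2i)} − 1) / ( q · (1 − q^{−(2s+2r−2i+1)}) ) and C⁺(s) = ∏_{i=1}^{r} (1 − q^{−2(2s+r+i)}) / (1 − q^{−2(2s+2i)}) · ∏_{i=1}^{r} (1 − q^{−(2s+2i)}) / (1 − q^{−(2s+2i−1)}). Then C⁻(s) = (−q)^{−r} · ( (1 − q^{−2s}) / (1 − q^{−(2s+2r)}) ) · C⁺(s). (Under the hypothesis Re(s) > 0 every denominator occurring is nonzero.) -/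
/-! Write `F z = 1 - q ^ (-z)`. For fixed `j` the inner product of `C⁻` telescopes to
`F (2 (2s + 2r - j + 1)) / F (2 (2s + 2r - 2j + 2))`, and the substitution `j ↦ r + 1 - j` turns
the outer product into the first product of `C⁺`. Each factor of the second product of `C⁻` is
`-q⁻¹ F (2s + 2r - 2i) / F (2s + 2r - 2i + 1)`; after `i ↦ r + 1 - i` its numerators
`F (2s + 2i - 2)` differ from those of `C⁺` by the telescoping ratio `F (2s) / F (2s + 2r)`. -/

open Finset

theorem one_sub_cpow_neg_ne_zero_s1 {q : ℝ} (hq : 1 < q) {z : ℂ} (hz : 0 < z.re) :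
    1 - (q : ℂ) ^ (-z) ≠ 0 := by
  refine sub_ne_zero.mpr (ne_of_apply_ne norm (ne_of_gt ?_))
  rw [Complex.norm_cpow_eq_rpow_re_of_pos (by linarith), norm_one, Complex.neg_re]
  exact Real.rpow_lt_one_of_one_lt_of_neg hq (by linarith)

theorem Finset.prod_Ico_div_succ₀ {K : Type*} [CommGroupWithZero K] {f : ℕ → K} {m n : ℕ}
    (hmn : m ≤ n) (hf : ∀ i ∈ Icc m n, f i ≠ 0) :
    ∏ i ∈ Ico m n, f i / f (i + 1) = f m / f n := by
  induction n, hmn using Nat.le_induction with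
  | base => simp [div_self (hf m (by simp))]
  | succ n hmn ih =>
    rw [prod_Ico_succ_top hmn, ih fun i hi => hf i (Icc_subset_Icc_right n.le_succ hi),
      div_mul_div_cancel₀ (hf n (by simp [hmn]))]

theorem Finset.prod_Icc_one_natCast_reflect {R M : Type*} [AddCommGroupWithOne R] [CommMonoid M]
    (φ : R → M) (r : ℕ) : ∏ i ∈ Icc 1 r, φ i = ∏ i ∈ Icc 1 r, φ (r + 1 - i) := by
  refine prod_nbij' (fun i => r + 1 - i) (fun i => r + 1 - i) ?_ ?_ ?_ ?_ fun i hi => ?_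
  all_goals try (intro i hi; simp only [mem_Icc] at hi ⊢; omega)
  rw [Nat.cast_sub (by simp only [mem_Icc] at hi; omega)]
  push_cast
  rw [sub_sub_cancel]

theorem prod_Icc_prod_Ico_div {K : Type*} [CommGroupWithZero K] (E : ℂ → K)
    (hE : ∀ z : ℂ, 0 < z.re → E z ≠ 0) {a : ℂ} (ha : 0 < a.re) (r : ℕ) :
    ∏ j ∈ Icc 1 r, ∏ i ∈ Ico 1 j, E (a + 2 * r - i - j + 2) / E (a + 2 * r - i - j + 1) =
      ∏ i ∈ Icc 1 r, E (a + r + i) / E (a + 2 * i) := by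
  have inner : ∀ j ∈ Icc 1 r,
      ∏ i ∈ Ico 1 j, E (a + 2 * r - i - j + 2) / E (a + 2 * r - i - j + 1) =
        E (a + 2 * r - j + 1) / E (a + 2 * r - 2 * j + 2) := by
    intro j hj
    obtain ⟨hj1, hjr⟩ := mem_Icc.mp hj
    set g : ℕ → K := fun i => E (a + 2 * r - j + 2 - i)
    have hg : ∀ i ∈ Icc 1 j, g i ≠ 0 := fun i hi => hE _ <| by
      have : (i : ℝ) ≤ j := by exact_mod_cast (mem_Icc.mp hi).2
      have : (j : ℝ) ≤ r := by exact_mod_cast hjr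
      simp only [Complex.add_re, Complex.sub_re, Complex.mul_re, Complex.re_ofNat,
        Complex.im_ofNat, Complex.natCast_re, Complex.natCast_im]
      linarith
    calc _ = ∏ i ∈ Ico 1 j, g i / g (i + 1) := prod_congr rfl fun i _ => by
            simp only [g]; push_cast; ring_nf
      _ = g 1 / g j := prod_Ico_div_succ₀ hj1 hg
      _ = _ := by simp only [g]; push_cast; ring_nf
  rw [prod_congr rfl inner,
    prod_Icc_one_natCast_reflect (fun x => E (a + 2 * r - x + 1) / E (a + 2 * r - 2 * x + 2))]
  refine prod_congr rfl fun i _ => ?_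
  ring_nf

theorem prod_Icc_neg_div_mul {K : Type*} [Field K] (F : ℂ → K) (c : K) (a : ℂ) (r : ℕ) :
    ∏ i ∈ Icc 1 r, -F (a + 2 * r - 2 * i) / (c * F (a + 2 * r - 2 * i + 1)) =
      (-c⁻¹) ^ r * ∏ i ∈ Icc 1 r, F (a + 2 * i - 2) / F (a + 2 * i - 1) := by
  calc _ = ∏ i ∈ Icc 1 r, -c⁻¹ * (F (a + 2 * r - 2 * i) / F (a + 2 * r - 2 * i + 1)) :=
        prod_congr rfl fun i _ => by ring
    _ = _ := by
      rw [prod_mul_distrib, prod_const, Nat.card_Icc, Nat.add_sub_cancel,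
        prod_Icc_one_natCast_reflect fun x => F (a + 2 * r - 2 * x) / F (a + 2 * r - 2 * x + 1)]
      refine congrArg _ (prod_congr rfl fun i _ => ?_)
      ring_nf

theorem prod_Icc_div_shift {K : Type*} [CommGroupWithZero K] (F : ℂ → K)
    (hF : ∀ z : ℂ, 0 < z.re → F z ≠ 0) {a : ℂ} (ha : 0 < a.re) (r : ℕ) :
    ∏ i ∈ Icc 1 r, F (a + 2 * i - 2) / F (a + 2 * i - 1) =
      F a / F (a + 2 * r) * ∏ i ∈ Icc 1 r, F (a + 2 * i) / F (a + 2 * i - 1) := by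
  set g : ℕ → K := fun i => F (a + 2 * i - 2)
  have hg : ∀ i ∈ Icc 1 (r + 1), g i ≠ 0 := fun i hi => hF _ <| by
    have : (1 : ℝ) ≤ i := by exact_mod_cast (mem_Icc.mp hi).1
    simp only [Complex.add_re, Complex.sub_re, Complex.mul_re, Complex.re_ofNat,
      Complex.im_ofNat, Complex.natCast_re, Complex.natCast_im]
    linarith
  have hg_succ : ∀ i : ℕ, g (i + 1) = F (a + 2 * i) := fun i => by
    simp only [g]; push_cast; ring_nf
  have telescope : ∏ i ∈ Icc 1 r, g i / g (i + 1) = F a / F (a + 2 * r) := by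
    rw [← Ico_add_one_right_eq_Icc, prod_Ico_div_succ₀ (by omega) hg, hg_succ]
    simp only [g]; push_cast; ring_nf
  rw [← telescope, ← prod_mul_distrib]
  refine prod_congr rfl fun i hi => ?_
  have hi' : i + 1 ∈ Icc 1 (r + 1) := by simp only [mem_Icc] at hi ⊢; omega
  rw [hg_succ, div_mul_div_cancel₀ (hg_succ i ▸ hg (i + 1) hi')]

theorem cMinus_eq_mul_cPlus {K : Type*} [Field K] (F : ℂ → K) (hF : ∀ z : ℂ, 0 < z.re → F z ≠ 0)
    (c : K) (r : ℕ) {a : ℂ} (ha : 0 < a.re) :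
    (∏ j ∈ Icc 1 r, ∏ i ∈ Ico 1 j,
        F (2 * (a + 2 * r - i - j + 2)) / F (2 * (a + 2 * r - i - j + 1))) *
      (∏ i ∈ Icc 1 r, -F (a + 2 * r - 2 * i) / (c * F (a + 2 * r - 2 * i + 1))) =
    (-c) ^ (-(r : ℤ)) * (F a / F (a + 2 * r)) *
      ((∏ i ∈ Icc 1 r, F (2 * (a + r + i)) / F (2 * (a + 2 * i))) *
        ∏ i ∈ Icc 1 r, F (a + 2 * i) / F (a + 2 * i - 1)) := by
  have hE : ∀ z : ℂ, 0 < z.re → F (2 * z) ≠ 0 := fun z hz => hF _ (by simpa using hz)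
  rw [prod_Icc_prod_Ico_div (fun z => F (2 * z)) hE ha, prod_Icc_neg_div_mul,
    prod_Icc_div_shift F hF ha, zpow_neg, zpow_natCast, ← inv_pow, inv_neg]
  ring

/-- The ratio identity `C⁻(s) = (−q)^{−r} · (1 − q^{−2s})/(1 − q^{−(2s+2r)}) · C⁺(s)`
between the almost-unramified and spherical (Gindikin–Karpelevich) intertwining constants,
equation (zeta6) in the proof of Proposition 5.2. -/
theorem stmt_1 (q : ℝ) (hq : 1 < q) (r : ℕ) (s : ℂ) (hs : 0 < s.re) :
    (∏ j ∈ Finset.Icc 1 r, ∏ i ∈ Finset.Ico 1 j,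
        (1 - (q : ℂ) ^ (-(2 * (2 * s + 2 * (r : ℂ) - (i : ℂ) - (j : ℂ) + 2)))) /
          (1 - (q : ℂ) ^ (-(2 * (2 * s + 2 * (r : ℂ) - (i : ℂ) - (j : ℂ) + 1))))) *
      (∏ i ∈ Finset.Icc 1 r,
        ((q : ℂ) ^ (-(2 * s + 2 * (r : ℂ) - 2 * (i : ℂ))) - 1) /
          ((q : ℂ) * (1 - (q : ℂ) ^ (-(2 * s + 2 * (r : ℂ) - 2 * (i : ℂ) + 1))))) =
    (-(q : ℂ)) ^ (-(r : ℤ)) *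
      ((1 - (q : ℂ) ^ (-(2 * s))) / (1 - (q : ℂ) ^ (-(2 * s + 2 * (r : ℂ))))) *
      ((∏ i ∈ Finset.Icc 1 r,
          (1 - (q : ℂ) ^ (-(2 * (2 * s + (r : ℂ) + (i : ℂ))))) /
            (1 - (q : ℂ) ^ (-(2 * (2 * s + 2 * (i : ℂ)))))) *
        (∏ i ∈ Finset.Icc 1 r,
          (1 - (q : ℂ) ^ (-(2 * s + 2 * (i : ℂ)))) /
            (1 - (q : ℂ) ^ (-(2 * s + 2 * (i : ℂ) - 1))))) := by
  simpa only [neg_sub] using cMinus_eq_mul_cPlus (fun z => 1 - (q : ℂ) ^ (-z))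
    (fun _ => one_sub_cpow_neg_ne_zero_s1 hq) (q : ℂ) r (a := 2 * s) (by simpa using hs)
end

section
/- Let q be a real number with q > 1, let r ≥ 1 be a natural number, and let s be a complex number with Re(s) > r. Then ∏_{j=1}^{2r} (1 − q^{−2(2s+2r−j+1)}) / (1 − q^{−2(2s+2r−2j+2)}) · ∏_{i=1}^{2r} (1 − q^{−(2s+2r−2i)}) / (1 − q^{−(2s+2r−2i+1)}) = ∏_{i=1}^{2r} (1 − (−1)^i q^{−(2s+i)}) / (1 − (−1)^i q^{−(2s−i+1)}) · (1 − q^{−(2s−2r)}) / (1 − q^{−(2s+2r)}). (Under the hypothesis Re(s) > r every denominator occurring is nonzero.) -/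
/-!
Put `u = q^{-(2s+2r)}` and `t = q`; every factor becomes `1 ± u^m t^k` with `k ∈ ℕ`. Splitting
`1 - u² t^{2k} = (1 - (-1)^k u t^k) (1 + (-1)^k u t^k)` turns the first numerator into the
right-hand numerator times `∏_{k<2r} (1 + (-1)^k u t^k)`, and together with the right-hand
denominator this is `∏_{k<4r} (1 + (-1)^k u t^k) = ∏_{k<2r} (1 + u t^{2k}) (1 - u t^{2k+1})`.
This cancels against the two left-hand denominators `∏ (1 - u² t^{4k})`, which is
`∏ (1 - u t^{2k}) (1 + u t^{2k})`, and `∏ (1 - u t^{2k+1})`; what is left,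
`∏_{k<2r} (1 - u t^{2k+2}) / (1 - u t^{2k})`, telescopes to `(1 - u t^{4r}) / (1 - u)`.
The hypothesis `r < Re s` gives `|u t^k| < 1` for `k ≤ 4r`, so no denominator vanishes.
-/

open Finset

theorem Finset.prod_range_two_mul {M : Type*} [CommMonoid M] (f : ℕ → M) (n : ℕ) :
    ∏ k ∈ range (2 * n), f k = ∏ k ∈ range n, (f (2 * k) * f (2 * k + 1)) := by
  induction n with
  | zero => simp
  | succ n ih => rw [mul_add_one, prod_range_succ, prod_range_succ, ih, prod_range_succ, mul_assoc]

theorem Finset.prod_Icc_one_eq_prod_range {M : Type*} [CommMonoid M] (f : ℕ → M) (n : ℕ) :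
    ∏ i ∈ Icc 1 n, f i = ∏ k ∈ range n, f (k + 1) := by
  rw [← Ico_add_one_right_eq_Icc, prod_Ico_eq_prod_range, add_tsub_cancel_right]
  simp only [add_comm 1]

section Rearrangement

variable {R : Type*} [CommRing R] (u t : R) (n : ℕ)

theorem zeta_product_rearrangement :
    (∏ k ∈ range n, (1 - u ^ 2 * t ^ (2 * k))) * (∏ k ∈ range n, (1 - u * t ^ (2 * (k + 1)))) *
        (∏ k ∈ range n, (1 + (-1) ^ (n + k) * u * t ^ (n + k))) * (1 - u) =
      (∏ k ∈ range n, (1 - u ^ 2 * t ^ (4 * k))) * (∏ k ∈ range n, (1 - u * t ^ (2 * k + 1))) *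
        (∏ k ∈ range n, (1 - (-1) ^ k * u * t ^ k)) * (1 - u * t ^ (2 * n)) := by
  set H : ℕ → R := fun k => 1 + (-1) ^ k * u * t ^ k
  have hA : ∏ k ∈ range n, (1 - u ^ 2 * t ^ (2 * k)) =
      (∏ k ∈ range n, (1 - (-1) ^ k * u * t ^ k)) * ∏ k ∈ range n, H k := by
    rw [← prod_mul_distrib]
    refine prod_congr rfl fun k _ => ?_
    have hsq : ((-1 : R) ^ k) ^ 2 = 1 := by rw [← pow_mul, mul_comm, pow_mul]; simp
    linear_combination (u * t ^ k) ^ 2 * hsq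
  have hH : (∏ k ∈ range n, H k) * ∏ k ∈ range n, H (n + k) =
      (∏ k ∈ range n, (1 + u * t ^ (2 * k))) * ∏ k ∈ range n, (1 - u * t ^ (2 * k + 1)) := by
    rw [← prod_range_add, ← two_mul, prod_range_two_mul, ← prod_mul_distrib]
    refine prod_congr rfl fun k _ => ?_
    simp only [H, pow_succ, pow_mul]
    ring
  have hB : ∏ k ∈ range n, (1 - u ^ 2 * t ^ (4 * k)) =
      (∏ k ∈ range n, (1 - u * t ^ (2 * k))) * ∏ k ∈ range n, (1 + u * t ^ (2 * k)) := by
    rw [← prod_mul_distrib]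
    exact prod_congr rfl fun k _ => by ring
  have telescope : (∏ k ∈ range n, (1 - u * t ^ (2 * (k + 1)))) * (1 - u) =
      (∏ k ∈ range n, (1 - u * t ^ (2 * k))) * (1 - u * t ^ (2 * n)) := by
    simpa using (prod_range_succ' (fun k => 1 - u * t ^ (2 * k)) n).symm.trans
      (prod_range_succ _ n)
  rw [hA, hB]
  linear_combination
    (∏ k ∈ range n, (1 - (-1) ^ k * u * t ^ k)) * (∏ k ∈ range n, (1 - u * t ^ (2 * (k + 1)))) *
      (1 - u) * hH +
    (∏ k ∈ range n, (1 - (-1) ^ k * u * t ^ k)) * (∏ k ∈ range n, (1 + u * t ^ (2 * k))) *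
      (∏ k ∈ range n, (1 - u * t ^ (2 * k + 1))) * telescope

end Rearrangement

section NormedField

variable {𝕜 : Type*} [NormedField 𝕜]

theorem one_add_ne_zero_of_norm_lt_one {x : 𝕜} (hx : ‖x‖ < 1) : 1 + x ≠ 0 := by
  intro h
  rw [add_eq_zero_iff_neg_eq] at h
  simp [← h] at hx

theorem one_sub_ne_zero_of_norm_lt_one {x : 𝕜} (hx : ‖x‖ < 1) : 1 - x ≠ 0 := by
  rw [sub_eq_add_neg]
  exact one_add_ne_zero_of_norm_lt_one (by rwa [norm_neg])

theorem zeta_product_rearrangement_div {u t : 𝕜} {n : ℕ} (ht : 1 ≤ ‖t‖)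
    (hu : ‖u * t ^ (2 * n)‖ < 1) :
    (∏ k ∈ range n, (1 - u ^ 2 * t ^ (2 * k))) / (∏ k ∈ range n, (1 - u ^ 2 * t ^ (4 * k))) *
        ((∏ k ∈ range n, (1 - u * t ^ (2 * (k + 1)))) / ∏ k ∈ range n, (1 - u * t ^ (2 * k + 1))) =
      (∏ k ∈ range n, (1 - (-1) ^ k * u * t ^ k)) /
          (∏ k ∈ range n, (1 + (-1) ^ (n + k) * u * t ^ (n + k))) *
        ((1 - u * t ^ (2 * n)) / (1 - u)) := by
  have small : ∀ m ≤ 2 * n, ‖u * t ^ m‖ < 1 := fun m hm =>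
    lt_of_le_of_lt (by rw [norm_mul, norm_mul, norm_pow, norm_pow]; gcongr) hu
  have hB : ∏ k ∈ range n, (1 - u ^ 2 * t ^ (4 * k)) ≠ 0 := prod_ne_zero_iff.2 fun k hk => by
    refine one_sub_ne_zero_of_norm_lt_one ?_
    rw [show u ^ 2 * t ^ (4 * k) = (u * t ^ (2 * k)) ^ 2 by ring, norm_pow]
    exact pow_lt_one₀ (norm_nonneg _) (small _ (by grind)) two_ne_zero
  have hD : ∏ k ∈ range n, (1 - u * t ^ (2 * k + 1)) ≠ 0 := prod_ne_zero_iff.2 fun k hk =>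
    one_sub_ne_zero_of_norm_lt_one (small _ (by grind))
  have hF : ∏ k ∈ range n, (1 + (-1) ^ (n + k) * u * t ^ (n + k)) ≠ 0 :=
    prod_ne_zero_iff.2 fun k hk => one_add_ne_zero_of_norm_lt_one <| by
      rw [mul_assoc, norm_mul, norm_pow, norm_neg, norm_one, one_pow, one_mul]
      exact small _ (by grind)
  have hH : 1 - u ≠ 0 := one_sub_ne_zero_of_norm_lt_one (by simpa using small 0 (Nat.zero_le _))
  rw [div_mul_div_comm, div_mul_div_comm, div_eq_div_iff (mul_ne_zero hB hD) (mul_ne_zero hF hH)]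
  linear_combination zeta_product_rearrangement u t n

end NormedField

section Cpow

variable {x : ℂ}

theorem prod_Icc_one_sub_cpow (hx : x ≠ 0) (w : ℂ) (m : ℕ) (k : ℕ → ℕ) {n : ℕ} {e : ℕ → ℂ}
    (he : ∀ j, e (j + 1) = m * w + k j) :
    ∏ i ∈ Icc 1 n, (1 - x ^ e i) = ∏ j ∈ range n, (1 - (x ^ w) ^ m * x ^ k j) := by
  rw [prod_Icc_one_eq_prod_range]
  exact prod_congr rfl fun j _ => by
    rw [he, Complex.cpow_add _ _ hx, Complex.cpow_nat_mul, Complex.cpow_natCast]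

theorem prod_Icc_one_sub_neg_one_pow_mul_cpow_add (hx : x ≠ 0) (z : ℂ) (r : ℕ) :
    ∏ i ∈ Icc 1 (2 * r), (1 - (-1) ^ i * x ^ (-(z + i))) =
      ∏ k ∈ range (2 * r), (1 - (-1) ^ k * x ^ (-(z + 2 * r)) * x ^ k) := by
  rw [prod_Icc_one_eq_prod_range, ← prod_range_reflect]
  refine prod_congr rfl fun k hk => ?_
  have hi : 2 * r - 1 - k + 1 + k = 2 * r := by grind
  generalize 2 * r - 1 - k + 1 = i at hi ⊢
  have hsign : (-1 : ℂ) ^ i = (-1) ^ k :=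
    neg_one_pow_congr (Nat.even_add.1 (hi ▸ even_two_mul r))
  have hexp : -(z + i) = -(z + 2 * r) + k := by
    rw [← Nat.cast_inj (R := ℂ)] at hi
    push_cast at hi
    linear_combination -hi
  rw [hsign, hexp, Complex.cpow_add _ _ hx, Complex.cpow_natCast, mul_assoc]

theorem prod_Icc_one_sub_neg_one_pow_mul_cpow_sub (hx : x ≠ 0) (z : ℂ) (r : ℕ) :
    ∏ i ∈ Icc 1 (2 * r), (1 - (-1) ^ i * x ^ (-(z - i + 1))) =
      ∏ k ∈ range (2 * r), (1 + (-1) ^ (2 * r + k) * x ^ (-(z + 2 * r)) * x ^ (2 * r + k)) := by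
  rw [prod_Icc_one_eq_prod_range]
  refine prod_congr rfl fun k _ => ?_
  have hsign : (-1 : ℂ) ^ (k + 1) = -(-1) ^ (2 * r + k) := by
    rw [pow_succ, pow_add, pow_mul]
    simp
  have hexp : -(z - ↑(k + 1) + 1) = -(z + 2 * r) + ↑(2 * r + k) := by push_cast; ring
  rw [hsign, hexp, Complex.cpow_add _ _ hx, Complex.cpow_natCast]
  ring

end Cpow

theorem stmt_4_general (q : ℝ) (hq : 1 < q) (r : ℕ) (s : ℂ) (hs : (r : ℝ) < s.re) :
    (∏ j ∈ Finset.Icc 1 (2 * r),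
        (1 - (q : ℂ) ^ (-(2 * (2 * s + 2 * (r : ℂ) - (j : ℂ) + 1)))) /
          (1 - (q : ℂ) ^ (-(2 * (2 * s + 2 * (r : ℂ) - 2 * (j : ℂ) + 2))))) *
      (∏ i ∈ Finset.Icc 1 (2 * r),
        (1 - (q : ℂ) ^ (-(2 * s + 2 * (r : ℂ) - 2 * (i : ℂ)))) /
          (1 - (q : ℂ) ^ (-(2 * s + 2 * (r : ℂ) - 2 * (i : ℂ) + 1)))) =
    (∏ i ∈ Finset.Icc 1 (2 * r),
        (1 - (-1 : ℂ) ^ i * (q : ℂ) ^ (-(2 * s + (i : ℂ)))) /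
          (1 - (-1 : ℂ) ^ i * (q : ℂ) ^ (-(2 * s - (i : ℂ) + 1)))) *
      ((1 - (q : ℂ) ^ (-(2 * s - 2 * (r : ℂ)))) / (1 - (q : ℂ) ^ (-(2 * s + 2 * (r : ℂ))))) := by
  have hq0 : 0 < q := zero_lt_one.trans hq
  have hq0' : (q : ℂ) ≠ 0 := by exact_mod_cast hq0.ne'
  have hG : (q : ℂ) ^ (-(2 * s - 2 * r)) =
      (q : ℂ) ^ (-(2 * s + 2 * r)) * (q : ℂ) ^ (2 * (2 * r)) := by
    rw [← Complex.cpow_natCast, ← Complex.cpow_add _ _ hq0']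
    push_cast
    ring_nf
  have ht : 1 ≤ ‖(q : ℂ)‖ := by rw [Complex.norm_real, Real.norm_of_nonneg hq0.le]; exact hq.le
  have hu : ‖(q : ℂ) ^ (-(2 * s + 2 * r)) * (q : ℂ) ^ (2 * (2 * r))‖ < 1 := by
    rw [← hG, Complex.norm_cpow_eq_rpow_re_of_pos hq0]
    exact Real.rpow_lt_one_of_one_lt_of_neg hq (by simpa using hs)
  set w := -(2 * s + 2 * (r : ℂ)) with hw
  rw [prod_div_distrib, prod_div_distrib, prod_div_distrib,
    prod_Icc_one_sub_cpow hq0' w 2 (fun j => 2 * j),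
    prod_Icc_one_sub_cpow hq0' w 2 (fun j => 4 * j),
    prod_Icc_one_sub_cpow hq0' w 1 (fun j => 2 * (j + 1)),
    prod_Icc_one_sub_cpow hq0' w 1 (fun j => 2 * j + 1),
    prod_Icc_one_sub_neg_one_pow_mul_cpow_add hq0', prod_Icc_one_sub_neg_one_pow_mul_cpow_sub hq0',
    hG]
  · simpa only [pow_one] using zeta_product_rearrangement_div ht hu
  all_goals intro j; rw [hw]; push_cast; ring

/-- The intermediate rearrangement in the proof of Lemma 5.4:
`∏_{j=1}^{2r} (1 − q^{−2(2s+2r−j+1)})/(1 − q^{−2(2s+2r−2j+2)})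
  · ∏_{i=1}^{2r} (1 − q^{−(2s+2r−2i)})/(1 − q^{−(2s+2r−2i+1)})
= ∏_{i=1}^{2r} (1 − (−1)^i q^{−(2s+i)})/(1 − (−1)^i q^{−(2s−i+1)})
  · (1 − q^{−(2s−2r)})/(1 − q^{−(2s+2r)})`. -/
theorem stmt_4 (q : ℝ) (hq : 1 < q) (r : ℕ) (hr : 1 ≤ r) (s : ℂ) (hs : (r : ℝ) < s.re) :
    (∏ j ∈ Finset.Icc 1 (2 * r),
        (1 - (q : ℂ) ^ (-(2 * (2 * s + 2 * (r : ℂ) - (j : ℂ) + 1)))) /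
          (1 - (q : ℂ) ^ (-(2 * (2 * s + 2 * (r : ℂ) - 2 * (j : ℂ) + 2))))) *
      (∏ i ∈ Finset.Icc 1 (2 * r),
        (1 - (q : ℂ) ^ (-(2 * s + 2 * (r : ℂ) - 2 * (i : ℂ)))) /
          (1 - (q : ℂ) ^ (-(2 * s + 2 * (r : ℂ) - 2 * (i : ℂ) + 1)))) =
    (∏ i ∈ Finset.Icc 1 (2 * r),
        (1 - (-1 : ℂ) ^ i * (q : ℂ) ^ (-(2 * s + (i : ℂ)))) /
          (1 - (-1 : ℂ) ^ i * (q : ℂ) ^ (-(2 * s - (i : ℂ) + 1)))) *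
      ((1 - (q : ℂ) ^ (-(2 * s - 2 * (r : ℂ)))) / (1 - (q : ℂ) ^ (-(2 * s + 2 * (r : ℂ))))) :=
  stmt_4_general q hq r s hs
end
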